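/- arXiv:2509.01340 — 2 statements merged into one kernel-verified Lean document; each statement's English description precedes it below -/
import Mathlib

section
/- Let X be a compact metric space and f : X → X continuous. Suppose for every n ∈ ℕ there is a finite family Hₙ of subsets of X, each with nonempty interior, whose union is X and with all members of Hₙ of diameter less than 2^{-n}, such that for all F, H ∈ Hₙ there exists k₀ with f^[k](F) ∩ H ≠ ∅ for every k ≥ k₀. Then f is topologically mixing. -/
/-!
Given nonempty open `U ∋ x` and `V ∋ y`, once `2⁻¹ ^ n` is below the radii of balls around `x`
in `U` and around `y` in `V`, the members of the `n`-th cover containing `x` and `y` lie in `U`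
and `V` respectively, so the eventual intersection property of the cover passes to `U` and `V`.
-/

open Metric Set Filter

def EventuallyMeets {X : Type*} (f : X → X) (A B : Set X) : Prop :=
  ∃ N : ℕ, ∀ n ≥ N, (f^[n] '' A ∩ B).Nonempty

theorem EventuallyMeets.mono {X : Type*} {f : X → X} {A A' B B' : Set X}
    (h : EventuallyMeets f A B) (hA : A ⊆ A') (hB : B ⊆ B') : EventuallyMeets f A' B' :=
  let ⟨N, hN⟩ := h
  ⟨N, fun n hn => (hN n hn).mono (inter_subset_inter (image_mono hA) hB)⟩

theorem Metric.eventually_subset_of_mem_of_diam_lt_two_inv_pow {X : Type*}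
    [PseudoMetricSpace X] [BoundedSpace X] {U : Set X} (hU : IsOpen U) {x : X} (hx : x ∈ U) :
    ∀ᶠ n : ℕ in atTop, ∀ F : Set X, x ∈ F → diam F < (2 : ℝ)⁻¹ ^ n → F ⊆ U := by
  obtain ⟨ε, hε, hball⟩ := isOpen_iff.1 hU x hx
  have hsmall : ∀ᶠ n : ℕ in atTop, (2 : ℝ)⁻¹ ^ n < ε :=
    (tendsto_pow_atTop_nhds_zero_of_lt_one (by norm_num) (by norm_num)).eventually
      (gt_mem_nhds hε)
  filter_upwards [hsmall] with n hn F hxF hF z hz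
  exact hball ((dist_le_diam_of_mem (Bornology.IsBounded.all F) hz hxF).trans_lt (hF.trans hn))

theorem mixing_of_small_covers_general {X : Type*} [MetricSpace X] [CompactSpace X]
    (f : X → X)
    (hcov : ∀ n : ℕ, ∃ H : Finset (Set X),
      (∀ F ∈ H, (interior F).Nonempty ∧ Metric.diam F < (2 : ℝ)⁻¹ ^ n) ∧
      (⋃₀ (H : Set (Set X))) = Set.univ ∧
      (∀ F ∈ H, ∀ G ∈ H, ∃ k₀ : ℕ, ∀ k ≥ k₀, (f^[k] '' F ∩ G).Nonempty)) :
    ∀ U V : Set X, IsOpen U → IsOpen V → U.Nonempty → V.Nonempty →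
      ∃ N : ℕ, ∀ n ≥ N, (f^[n] '' U ∩ V).Nonempty := by
  intro U V hU hV ⟨x, hx⟩ ⟨y, hy⟩
  obtain ⟨n, hUn, hVn⟩ := ((eventually_subset_of_mem_of_diam_lt_two_inv_pow hU hx).and
    (eventually_subset_of_mem_of_diam_lt_two_inv_pow hV hy)).exists
  obtain ⟨H, hdiam, hcover, hmeets⟩ := hcov n
  obtain ⟨F, hF, hxF⟩ := mem_sUnion.1 (hcover ▸ mem_univ x)
  obtain ⟨G, hG, hyG⟩ := mem_sUnion.1 (hcover ▸ mem_univ y)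
  have hFG : EventuallyMeets f F G := hmeets F hF G hG
  exact hFG.mono (hUn F hxF (hdiam F hF).2) (hVn G hyG (hdiam G hG).2)

theorem mixing_of_small_covers {X : Type*} [MetricSpace X] [CompactSpace X]
    (f : X → X) (hf : Continuous f)
    (hcov : ∀ n : ℕ, ∃ H : Finset (Set X),
      (∀ F ∈ H, (interior F).Nonempty ∧ Metric.diam F < (2 : ℝ)⁻¹ ^ n) ∧
      (⋃₀ (H : Set (Set X))) = Set.univ ∧
      (∀ F ∈ H, ∀ G ∈ H, ∃ k₀ : ℕ, ∀ k ≥ k₀, (f^[k] '' F ∩ G).Nonempty)) :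
    ∀ U V : Set X, IsOpen U → IsOpen V → U.Nonempty → V.Nonempty →
      ∃ N : ℕ, ∀ n ≥ N, (f^[n] '' U ∩ V).Nonempty :=
  mixing_of_small_covers_general f hcov
end

section
/- Let X be a compact metric space and f : X → X continuous and chain transitive, and suppose X is connected. Then f is chain mixing: for every δ > 0 there exists N ∈ ℕ such that for every n ≥ N and every x, y ∈ X there exists a δ-chain of f from x to y of length exactly n. -/
/-!
Fix `δ > 0` and a base point `x₀`. The lengths of `δ`-chains from `x₀` to itself form an
additive submonoid of `ℕ`. If `m` divides all of them, the length of a chain from `x₀` to `y` is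
determined modulo `m` by `y`, and the sets of endpoints of chains of length `≡ 0` and `≢ 0`
(mod `m`) are open, disjoint and cover `X`; connectedness forces `m = 1` (the one-step chain from
`x₀` to `f x₀` lies in the second set). So the submonoid has gcd `1` and contains every large
integer. Compactness bounds the length of some chain from any `x` to `x₀` and from `x₀` to any
`y`, and padding with loops at `x₀` gives chains of every large length.
-/

open Set

section Dist

variable {X : Type*} [Dist X] (f : X → X) (δ : ℝ)

def HasChain (n : ℕ) (x y : X) : Prop :=
  ∃ c : ℕ → X, c 0 = x ∧ c n = y ∧ ∀ i < n, dist (f (c i)) (c (i + 1)) < δ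

def ChainTransitiveAt : Prop :=
  ∀ x y : X, ∃ n, 1 ≤ n ∧ HasChain f δ n x y

variable {f δ}

namespace HasChain

theorem zero_iff {x y : X} : HasChain f δ 0 x y ↔ x = y :=
  ⟨fun ⟨_, hc0, hcn, _⟩ => hc0 ▸ hcn, fun h => ⟨fun _ => y, h.symm, rfl, by simp⟩⟩

theorem refl (x : X) : HasChain f δ 0 x x :=
  zero_iff.2 rfl

theorem succ_iff {n : ℕ} {x z : X} :
    HasChain f δ (n + 1) x z ↔ ∃ y, dist (f x) y < δ ∧ HasChain f δ n y z := by
  constructor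
  · rintro ⟨c, rfl, rfl, hc⟩
    exact ⟨c 1, hc 0 n.succ_pos, fun i => c (i + 1), rfl, rfl,
      fun i hi => hc (i + 1) (by omega)⟩
  · rintro ⟨y, hxy, c, rfl, rfl, hc⟩
    refine ⟨fun i => if i = 0 then x else c (i - 1), rfl, rfl, fun i hi => ?_⟩
    cases i with
    | zero => simpa using hxy
    | succ i => simpa using hc i (by omega)

theorem trans {m n : ℕ} {x y z : X} (hxy : HasChain f δ m x y) (hyz : HasChain f δ n y z) :
    HasChain f δ (m + n) x z := by
  induction m generalizing x with
  | zero => rwa [zero_iff.1 hxy, zero_add]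
  | succ m ih =>
    obtain ⟨w, hxw, hwy⟩ := succ_iff.1 hxy
    rw [Nat.succ_add]
    exact succ_iff.2 ⟨w, hxw, ih hwy⟩

end HasChain

variable (f δ) in
def loopLengths (x : X) : AddSubmonoid ℕ where
  carrier := {n | HasChain f δ n x x}
  zero_mem' := HasChain.refl x
  add_mem' := HasChain.trans

end Dist

section PseudoMetric

variable {X : Type*} [PseudoMetricSpace X] {f : X → X} {δ : ℝ}

theorem isOpen_setOf_hasChain (x : X) {n : ℕ} (hn : 1 ≤ n) :
    IsOpen {y | HasChain f δ n x y} := by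
  obtain ⟨n, rfl⟩ := Nat.exists_eq_add_of_le' hn
  induction n generalizing x with
  | zero =>
    simp only [HasChain.succ_iff, HasChain.zero_iff, exists_eq_right, dist_comm (f x)]
    exact Metric.isOpen_ball
  | succ n ih =>
    have : {z | HasChain f δ (n + 1 + 1) x z} =
        ⋃ y ∈ Metric.ball (f x) δ, {z | HasChain f δ (n + 1) y z} := by
      ext; simp [HasChain.succ_iff, dist_comm]
    rw [this]
    exact isOpen_biUnion fun y _ => ih y (by omega)

theorem isOpen_setOf_exists_dist_lt_hasChain (n : ℕ) (z : X) :
    IsOpen {x | ∃ y, dist x y < δ ∧ HasChain f δ n y z} := by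
  have : {x | ∃ y, dist x y < δ ∧ HasChain f δ n y z} =
      ⋃ y ∈ {y | HasChain f δ n y z}, Metric.ball y δ := by
    ext; simp [and_comm]
  rw [this]
  exact isOpen_biUnion fun y _ => Metric.isOpen_ball

end PseudoMetric

theorem CompactSpace.exists_forall_exists_le {X : Type*} [TopologicalSpace X] [CompactSpace X]
    {P : ℕ → X → Prop} (hP : ∀ n, IsOpen {x | P n x}) (hcover : ∀ x, ∃ n, P n x) :
    ∃ N, ∀ x, ∃ n ≤ N, P n x := by
  obtain ⟨N, hN⟩ := isCompact_univ.elim_directed_cover (fun N => ⋃ n ≤ N, {x | P n x})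
    (fun N => isOpen_biUnion fun n _ => hP n)
    (fun x _ => let ⟨n, hn⟩ := hcover x; mem_iUnion.2 ⟨n, mem_biUnion le_rfl hn⟩)
    (Monotone.directed_le fun _ _ hMN =>
      biUnion_mono (fun _ h => le_trans h hMN) fun _ _ => le_rfl)
  exact ⟨N, fun x => by simpa using hN (mem_univ x)⟩

section Bounds

variable {X : Type*} [PseudoMetricSpace X] [CompactSpace X] {f : X → X} {δ : ℝ}

theorem ChainTransitiveAt.exists_forall_hasChain_from (htrans : ChainTransitiveAt f δ) (x₀ : X) :
    ∃ N, ∀ y, ∃ n ≤ N, HasChain f δ (n + 1) x₀ y := by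
  refine CompactSpace.exists_forall_exists_le (fun n => isOpen_setOf_hasChain x₀ n.succ_pos)
    fun y => ?_
  obtain ⟨n, hn, hc⟩ := htrans x₀ y
  exact ⟨n - 1, by rwa [Nat.sub_add_cancel hn]⟩

-- A chain from `x` depends on `x` only through `f x`, so compactness is applied at `f x`.
theorem ChainTransitiveAt.exists_forall_hasChain_to (hδ : 0 < δ) (htrans : ChainTransitiveAt f δ)
    (x₀ : X) : ∃ N, ∀ x, ∃ n ≤ N, HasChain f δ (n + 1) x x₀ := by
  have hcover (z : X) : ∃ n y, dist z y < δ ∧ HasChain f δ n y x₀ :=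
    let ⟨n, _, hc⟩ := htrans z x₀
    ⟨n, z, by rwa [dist_self], hc⟩
  obtain ⟨N, hN⟩ := CompactSpace.exists_forall_exists_le
    (fun n => isOpen_setOf_exists_dist_lt_hasChain n x₀) hcover
  exact ⟨N, fun x => (hN (f x)).imp fun n => And.imp_right HasChain.succ_iff.2⟩

end Bounds

section Connected

variable {X : Type*} [PseudoMetricSpace X] [PreconnectedSpace X] {f : X → X} {δ : ℝ}

theorem ChainTransitiveAt.setGcd_loopLengths (hδ : 0 < δ) (htrans : ChainTransitiveAt f δ)
    (x₀ : X) : Nat.setGcd (loopLengths f δ x₀ : Set ℕ) = 1 := by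
  set m := Nat.setGcd (loopLengths f δ x₀ : Set ℕ)
  have hm : ∀ n ∈ loopLengths f δ x₀, m ∣ n := Nat.dvd_setGcd_iff.1 dvd_rfl
  have hlen {n₁ n₂ : ℕ} {y : X} (h₁ : HasChain f δ n₁ x₀ y) (h₂ : HasChain f δ n₂ x₀ y)
      (hdvd : m ∣ n₁) : m ∣ n₂ := by
    obtain ⟨r, -, hr⟩ := htrans y x₀
    have hmr : m ∣ r := (Nat.dvd_add_right hdvd).1 (hm _ (h₁.trans hr))
    exact (Nat.dvd_add_left hmr).1 (hm _ (h₂.trans hr))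
  let U := ⋃ n, ⋃ (_ : 1 ≤ n ∧ m ∣ n), {y | HasChain f δ n x₀ y}
  let V := ⋃ n, ⋃ (_ : 1 ≤ n ∧ ¬ m ∣ n), {y | HasChain f δ n x₀ y}
  have hU : IsOpen U :=
    isOpen_iUnion fun _ => isOpen_iUnion fun h => isOpen_setOf_hasChain x₀ h.1
  have hV : IsOpen V :=
    isOpen_iUnion fun _ => isOpen_iUnion fun h => isOpen_setOf_hasChain x₀ h.1
  have hcover : univ ⊆ U ∪ V := fun y _ => by
    obtain ⟨n, hn, hc⟩ := htrans x₀ y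
    by_cases hmn : m ∣ n
    · exact Or.inl (mem_iUnion₂.2 ⟨n, ⟨hn, hmn⟩, hc⟩)
    · exact Or.inr (mem_iUnion₂.2 ⟨n, ⟨hn, hmn⟩, hc⟩)
  have hx₀ : x₀ ∈ U := by
    obtain ⟨n, hn, hc⟩ := htrans x₀ x₀
    exact mem_iUnion₂.2 ⟨n, ⟨hn, hm n hc⟩, hc⟩
  by_contra hm1
  have hfx₀ : f x₀ ∈ V :=
    mem_iUnion₂.2 ⟨1, ⟨le_rfl, mt Nat.dvd_one.1 hm1⟩,
      HasChain.succ_iff.2 ⟨f x₀, by rwa [dist_self], HasChain.refl _⟩⟩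
  obtain ⟨y, -, hyU, hyV⟩ :=
    isPreconnected_univ U V hU hV hcover ⟨x₀, trivial, hx₀⟩ ⟨f x₀, trivial, hfx₀⟩
  obtain ⟨n₁, ⟨-, hdvd⟩, h₁⟩ := mem_iUnion₂.1 hyU
  obtain ⟨n₂, ⟨-, hndvd⟩, h₂⟩ := mem_iUnion₂.1 hyV
  exact hndvd (hlen h₁ h₂ hdvd)

theorem ChainTransitiveAt.exists_forall_ge_mem_loopLengths (hδ : 0 < δ)
    (htrans : ChainTransitiveAt f δ) (x₀ : X) : ∃ K, ∀ k ≥ K, k ∈ loopLengths f δ x₀ := by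
  obtain ⟨K, hK⟩ := Nat.exists_mem_closure_of_ge (loopLengths f δ x₀ : Set ℕ)
  refine ⟨K, fun k hk => ?_⟩
  simpa using hK k hk (htrans.setGcd_loopLengths hδ x₀ ▸ one_dvd k)

end Connected

theorem chainTransitive_implies_chainMixing_general {X : Type*} [MetricSpace X] [CompactSpace X]
    [ConnectedSpace X] (f : X → X)
    (hct : ∀ x y : X, ∀ δ > (0 : ℝ), ∃ n : ℕ, 1 ≤ n ∧ ∃ c : ℕ → X,
      c 0 = x ∧ c n = y ∧ ∀ i < n, dist (f (c i)) (c (i + 1)) < δ) :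
    ∀ δ > (0 : ℝ), ∃ N : ℕ, ∀ n ≥ N, ∀ x y : X, ∃ c : ℕ → X,
      c 0 = x ∧ c n = y ∧ ∀ i < n, dist (f (c i)) (c (i + 1)) < δ := by
  intro δ hδ
  have htrans : ChainTransitiveAt f δ := fun x y => hct x y δ hδ
  obtain ⟨x₀⟩ : Nonempty X := inferInstance
  obtain ⟨K, hK⟩ := htrans.exists_forall_ge_mem_loopLengths hδ x₀
  obtain ⟨L₁, hL₁⟩ := htrans.exists_forall_hasChain_to hδ x₀
  obtain ⟨L₂, hL₂⟩ := htrans.exists_forall_hasChain_from x₀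
  refine ⟨L₁ + K + L₂ + 2, fun n hn x y => ?_⟩
  obtain ⟨a, ha, hx⟩ := hL₁ x
  obtain ⟨b, hb, hy⟩ := hL₂ y
  have hloop : HasChain f δ (n - (a + 1) - (b + 1)) x₀ x₀ := hK _ (by omega)
  have hlen : a + 1 + (n - (a + 1) - (b + 1)) + (b + 1) = n := by omega
  exact hlen ▸ (hx.trans hloop).trans hy

theorem chainTransitive_implies_chainMixing {X : Type*} [MetricSpace X] [CompactSpace X]
    [ConnectedSpace X] (f : X → X) (hf : Continuous f)
    (hct : ∀ x y : X, ∀ δ > (0 : ℝ), ∃ n : ℕ, 1 ≤ n ∧ ∃ c : ℕ → X,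
      c 0 = x ∧ c n = y ∧ ∀ i < n, dist (f (c i)) (c (i + 1)) < δ) :
    ∀ δ > (0 : ℝ), ∃ N : ℕ, ∀ n ≥ N, ∀ x y : X, ∃ c : ℕ → X,
      c 0 = x ∧ c n = y ∧ ∀ i < n, dist (f (c i)) (c (i + 1)) < δ :=
  chainTransitive_implies_chainMixing_general f hct
end
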